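/- Let A be a q×q real matrix possessing a real eigenvalue b > 0 with b ≥ Re λ for every eigenvalue λ of A, and fix ω_0 > 0. Set ω_k := ω_0 + kb and F_{ℓ,n} := ∏_{ℓ ≤ k < n}(I + ω_k^{-1}A). Then there is a constant C (depending only on A and ω_0) such that for every eigenvalue λ of A and all integers 1 ≤ ℓ ≤ n, the operator norm satisfies ‖P_λ F_{ℓ,n}‖ ≤ C (n/ℓ)^{Re λ/b} (1 + log(n/ℓ))^{ν_λ}. -/

import Mathlib

open MeasureTheory ProbabilityTheory Filter Matrix Asymptotics
open scoped ENNReal NNReal Topology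

noncomputable section

namespace PolyaUrnPaper

/-- The state space of a `q`-colour urn: vectors in `ℝ^q` with the Euclidean norm. -/
abbrev E (q : ℕ) := EuclideanSpace ℝ (Fin q)

/-- The complexified state space `ℂ^q` with the Euclidean norm. -/
abbrev EC (q : ℕ) := EuclideanSpace ℂ (Fin q)

variable {q : ℕ}

/-- Total activity `a · x` of a composition vector `x`. -/
def totAct (a : Fin q → ℝ) (x : E q) : ℝ := ∑ i, a i * x i

/-- Coordinatewise complexification of a real vector. -/
def toC (x : E q) : EC q := WithLp.toLp 2 (fun i => (x i : ℂ))

variable {Ω : Type*} [MeasurableSpace Ω]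

/-- The σ-field `ℱ_n` generated by `X_1, …, X_n`. -/
def urnFiltration (X : ℕ → Ω → E q) (n : ℕ) : MeasurableSpace Ω :=
  ⨆ k ∈ Finset.Icc 1 n, MeasurableSpace.comap (X k) inferInstance

/-- The total activity process `S_n = a · X_n`. -/
def Sproc (a : Fin q → ℝ) (X : ℕ → Ω → E q) (n : ℕ) (ω : Ω) : ℝ := totAct a (X n ω)

/-- The increment `ΔX_n = X_{n+1} - X_n`. -/
def ΔX (X : ℕ → Ω → E q) (n : ℕ) (ω : Ω) : E q := X (n + 1) ω - X n ω

/-- The event `E_n^c` of non-extinction up to time `n`. -/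
def NE (a : Fin q → ℝ) (X : ℕ → Ω → E q) (n : ℕ) : Set Ω :=
  {ω | ∀ k ≤ n, 0 < Sproc a X k ω}

/-- The event of non-extinction (at all times). -/
def NEinf (a : Fin q → ℝ) (X : ℕ → Ω → E q) : Set Ω :=
  {ω | ∀ k, 0 < Sproc a X k ω}

/-- A generalized Pólya urn process: `P` is a probability measure, `a` the (nonnegative)
activity vector, `ξ i` the law of the replacement vector for colour `i`, `X₀` the non-random
initial composition with `a · X₀ > 0`, and `X` the urn process.  The `dynamics` field states
that conditionally on `ℱ_n`, on the event `S_n > 0` the increment `ΔX_n` is distributed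
as the mixture `∑ i (a_i X_{n,i}/S_n) ξ_i` (drawing colour `i` with probability
`a_i X_{n,i}/S_n` and then using law `ξ_i`, independently of the past), and `ΔX_n = 0`
on the event `S_n = 0`. -/
structure IsPolyaUrn (P : Measure Ω) (a : Fin q → ℝ) (ξ : Fin q → Measure (E q))
    (X₀ : E q) (X : ℕ → Ω → E q) : Prop where
  probP : IsProbabilityMeasure P
  probξ : ∀ i, IsProbabilityMeasure (ξ i)
  ha : ∀ i, 0 ≤ a i
  hX₀nonneg : ∀ i, 0 ≤ X₀ i
  haX₀ : 0 < totAct a X₀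
  hX0 : ∀ ω, X 0 ω = X₀
  measX : ∀ n, Measurable (X n)
  dynamics : ∀ n, ∀ B : Set (E q), MeasurableSet B →
    ∀ᵐ ω ∂P,
      (P[fun ω' => B.indicator (fun _ => (1 : ℝ)) (ΔX X n ω') | urnFiltration X n]) ω =
        if 0 < Sproc a X n ω then
          ∑ i, (a i * X n ω i / Sproc a X n ω) * (ξ i B).toReal
        else B.indicator (fun _ => (1 : ℝ)) 0

/-- Tenability: almost surely all coordinates of `X_n` are nonnegative for all `n`. -/
def Tenable (P : Measure Ω) (X : ℕ → Ω → E q) : Prop :=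
  ∀ n, ∀ᵐ ω ∂P, ∀ i, 0 ≤ X n ω i

/-- The urn is balanced in expectation with constant `b`:
`a · E ξ_i = b` for every colour `i` with positive activity. -/
def BalancedInExp (a : Fin q → ℝ) (ξ : Fin q → Measure (E q)) (b : ℝ) : Prop :=
  ∀ i, 0 < a i → ∫ x, totAct a x ∂(ξ i) = b

/-- The intensity matrix `A = (a_j E ξ_{j,i})_{i,j}`. -/
def intensity (a : Fin q → ℝ) (ξ : Fin q → Measure (E q)) : Matrix (Fin q) (Fin q) ℝ :=
  Matrix.of fun i j => a j * ∫ x, x i ∂(ξ j)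

/-- The intensity matrix viewed as a complex matrix. -/
def intensityC (a : Fin q → ℝ) (ξ : Fin q → Measure (E q)) : Matrix (Fin q) (Fin q) ℂ :=
  (intensity a ξ).map Complex.ofReal

/-- The largest eigenvalue `λ₁` of `A` equals `b`: `b` is an eigenvalue and it dominates
the real parts of all eigenvalues. -/
def LambdaOneIs (A : Matrix (Fin q) (Fin q) ℂ) (b : ℝ) : Prop :=
  (b : ℂ) ∈ spectrum ℂ A ∧ ∀ μ ∈ spectrum ℂ A, μ.re ≤ b

/-- Condition `U(p)`: the urn is tenable and balanced in expectation with `λ₁ = b > 0`,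
and `E|ξ_i|^p < ∞` for all colours `i`. -/
def CondU (P : Measure Ω) (a : Fin q → ℝ) (ξ : Fin q → Measure (E q))
    (X₀ : E q) (X : ℕ → Ω → E q) (b : ℝ) (p : ℝ) : Prop :=
  IsPolyaUrn P a ξ X₀ X ∧ Tenable P X ∧ BalancedInExp a ξ b ∧ 0 < b ∧
    LambdaOneIs (intensityC a ξ) b ∧
    ∀ i, ∫⁻ x, (‖x‖₊ : ℝ≥0∞) ^ p ∂(ξ i) < ∞

/-- `Re λ₂`: the largest real part among the eigenvalues of `A` (counted with algebraic
multiplicity) after removing one copy of `λ₁ = b`. -/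
def secondRe (A : Matrix (Fin q) (Fin q) ℂ) (b : ℝ) : ℝ :=
  letI : DecidableEq ℂ := Classical.decEq ℂ
  sSup (Complex.re '' {μ : ℂ | μ ∈ A.charpoly.roots.erase (b : ℂ)})

/-- `ν_λ`: one less than the size of the largest Jordan block of `A` for `λ`, i.e. the least
`m` such that `ker (A - λ)^{m+1} = ker (A - λ)^{m+2}`. -/
def nuOf (A : Matrix (Fin q) (Fin q) ℂ) (μ : ℂ) : ℕ :=
  sInf {m : ℕ | LinearMap.ker (Matrix.mulVecLin ((A - μ • 1) ^ (m + 1))) =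
      LinearMap.ker (Matrix.mulVecLin ((A - μ • 1) ^ (m + 2)))}

/-- `ν₂ = ν_{λ₂}`: the largest `ν_μ` among remaining eigenvalues `μ` with `Re μ = Re λ₂`. -/
def secondNu (A : Matrix (Fin q) (Fin q) ℂ) (b : ℝ) : ℕ :=
  letI : DecidableEq ℂ := Classical.decEq ℂ
  sSup (nuOf A '' {μ : ℂ | μ ∈ A.charpoly.roots.erase (b : ℂ) ∧ μ.re = secondRe A b})

/-- The generalized eigenspace of a matrix `A` for `μ`, i.e. `ker (A - μ I)^q`. -/
def genEig (A : Matrix (Fin q) (Fin q) ℂ) (μ : ℂ) : Submodule ℂ (Fin q → ℂ) :=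
  LinearMap.ker (Matrix.mulVecLin ((A - μ • 1) ^ q))

/-- `Pm` is the spectral projection of `A` for the eigenvalue `μ`: the projection onto the
generalized eigenspace of `μ` along the sum of the generalized eigenspaces of the other
eigenvalues. -/
def IsSpectralProjection (A : Matrix (Fin q) (Fin q) ℂ) (μ : ℂ)
    (Pm : Matrix (Fin q) (Fin q) ℂ) : Prop :=
  Pm * Pm = Pm ∧
    LinearMap.range Pm.mulVecLin = genEig A μ ∧
    LinearMap.ker Pm.mulVecLin = ⨆ ν ∈ spectrum ℂ A \ {μ}, genEig A ν

/-- `ω_n = a·X₀ + n b`, the conditional expectation of the total activity. -/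
def omegaSeq (a : Fin q → ℝ) (X₀ : E q) (b : ℝ) (n : ℕ) : ℝ := totAct a X₀ + n * b

/-- The matrix product `F_{ℓ,n} = ∏_{ℓ ≤ k < n} (I + ω_k⁻¹ A)` (complex version). -/
def FprodC (A : Matrix (Fin q) (Fin q) ℂ) (w : ℕ → ℝ) (l n : ℕ) : Matrix (Fin q) (Fin q) ℂ :=
  (((List.range' l (n - l)).map fun k =>
      (1 : Matrix (Fin q) (Fin q) ℂ) + ((w k : ℂ))⁻¹ • A)).prod

/-- The matrix product `F_{ℓ,n} = ∏_{ℓ ≤ k < n} (I + ω_k⁻¹ A)` (real version). -/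
def FprodR (A : Matrix (Fin q) (Fin q) ℝ) (w : ℕ → ℝ) (l n : ℕ) : Matrix (Fin q) (Fin q) ℝ :=
  (((List.range' l (n - l)).map fun k =>
      (1 : Matrix (Fin q) (Fin q) ℝ) + (w k)⁻¹ • A)).prod

/-- The operator norm (w.r.t. Euclidean norms) of a complex matrix. -/
def opNorm (M : Matrix (Fin q) (Fin q) ℂ) : ℝ :=
  ‖LinearMap.toContinuousLinearMap (Matrix.toEuclideanLin M)‖

/-- The conditional expectation `E[X_n | E_n^c]` of the urn composition given
non-extinction up to time `n`. -/
def condMean (P : Measure Ω) (a : Fin q → ℝ) (X : ℕ → Ω → E q) (n : ℕ) : E q :=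
  ∫ ω, X n ω ∂(P[|NE a X n])

/-- The martingale difference part `Y_n = ΔX_{n-1} - E[ΔX_{n-1} | ℱ_{n-1}]`. -/
def Yseq (P : Measure Ω) (X : ℕ → Ω → E q) (n : ℕ) (ω : Ω) : E q :=
  ΔX X (n - 1) ω - (P[ΔX X (n - 1) | urnFiltration X (n - 1)]) ω

/-- The noise part `Z_n = ((ω_{n-1} - S_{n-1})/ω_{n-1}) E[ΔX_{n-1} | ℱ_{n-1}]`. -/
def Zseq (P : Measure Ω) (a : Fin q → ℝ) (X₀ : E q) (b : ℝ) (X : ℕ → Ω → E q)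
    (n : ℕ) (ω : Ω) : E q :=
  ((omegaSeq a X₀ b (n - 1) - Sproc a X (n - 1) ω) / omegaSeq a X₀ b (n - 1)) •
    (P[ΔX X (n - 1) | urnFiltration X (n - 1)]) ω

/-- `(Y_n)_{n ≥ 1}` is a martingale difference sequence for the filtration `ℱ`. -/
def IsMDSeq {V : Type*} [NormedAddCommGroup V] [NormedSpace ℝ V] [CompleteSpace V]
    (P : Measure Ω) (ℱ : ℕ → MeasurableSpace Ω) (Y : ℕ → Ω → V) : Prop :=
  ∀ n, 1 ≤ n → Integrable (Y n) P ∧ StronglyMeasurable[ℱ n] (Y n) ∧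
    P[Y n | ℱ (n - 1)] =ᵐ[P] 0

/-- `G` is a centered Gaussian measure on `ℝ^q` with covariance matrix `Sig`,
characterized through its characteristic function. -/
def IsCenteredGaussianWithCov (Sig : Matrix (Fin q) (Fin q) ℝ) (G : Measure (E q)) : Prop :=
  IsProbabilityMeasure G ∧
    ∀ t : E q, ∫ x, Complex.exp (Complex.I * ((∑ i, t i * x i : ℝ) : ℂ)) ∂G =
      Complex.exp (-(1 / 2 : ℂ) * ((∑ i, ∑ j, t i * Sig i j * t j : ℝ) : ℂ))

/-- Convergence in distribution of a sequence of (probability) measures on `ℝ^q`: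
integrals of every bounded continuous function converge. -/
def TendstoInDistribution (μs : ℕ → Measure (E q)) (G : Measure (E q)) : Prop :=
  ∀ f : BoundedContinuousFunction (E q) ℝ,
    Tendsto (fun n => ∫ x, f x ∂(μs n)) atTop (𝓝 (∫ x, f x ∂G))

/-- Multiplication of a real matrix with a vector in `ℝ^q` (Euclidean). -/
def mulVecE {q : ℕ} (M : Matrix (Fin q) (Fin q) ℝ) (v : E q) : E q :=
  WithLp.toLp 2 (fun i => ∑ j, M i j * v j)

/-- Multiplication of a complex matrix with a vector in `ℂ^q` (Euclidean). -/
def mulVecEC {q : ℕ} (M : Matrix (Fin q) (Fin q) ℂ) (v : EC q) : EC q :=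
  WithLp.toLp 2 (fun i => ∑ j, M i j * v j)

/-- The algebraic multiplicity of `μ` as an eigenvalue of `A` (as a root of the
characteristic polynomial). -/
def algMult {q : ℕ} (A : Matrix (Fin q) (Fin q) ℂ) (μ : ℂ) : ℕ :=
  letI : DecidableEq ℂ := Classical.decEq ℂ
  A.charpoly.roots.count μ

end PolyaUrnPaper

open PolyaUrnPaper MeasureTheory Matrix

/-!
On the range of the spectral projection `P_λ`, the matrix `N = A - λ` commutes with `P_λ` and
satisfies `N ^ (ν_λ + 1) P_λ = 0`. Writing `I + ω_k⁻¹ A = (1 + λ/ω_k) I + ω_k⁻¹ N`, we get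
`P_λ F_{ℓ,n} = ∑_{j ≤ ν_λ} e_j N^j P_λ`, where `e_j` is the `j`-th coefficient of
`∏_{ℓ ≤ k < n} ((1 + λ/ω_k) + X/ω_k)`. From `|1 + z| ≤ exp (Re z + |z|²/2)` one gets
`|e_j| ≤ (κ D)^j exp (Re λ · D + O(1))` with `κ = exp (|λ|/ω₀)` and `D = ∑_{ℓ ≤ k < n} ω_k⁻¹`;
telescoping against the logarithm gives `D = log (n/ℓ) / b + O(1)`, so `|e_j| = O((n/ℓ)^{Re λ/b} (1 + log (n/ℓ))^j)`.
Spectral projections are unique, so one constant works for the finitely many eigenvalues.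
-/

open Real Finset Polynomial
open scoped Matrix.Norms.L2Operator

lemma norm_one_add_le_exp (z : ℂ) : ‖1 + z‖ ≤ exp (z.re + ‖z‖ ^ 2 / 2) := by
  have hsq : ‖1 + z‖ ^ 2 = 1 + (2 * z.re + ‖z‖ ^ 2) := by
    rw [Complex.sq_norm, Complex.normSq_add, Complex.normSq_one, Complex.normSq_eq_norm_sq]
    simp only [Complex.conj_re, one_mul]
    ring
  refine (sq_le_sq₀ (norm_nonneg _) (exp_pos _).le).1 ?_
  rw [hsq, ← exp_nat_mul, add_comm, Nat.cast_ofNat,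
    show (2 : ℝ) * (z.re + ‖z‖ ^ 2 / 2) = 2 * z.re + ‖z‖ ^ 2 by ring]
  exact add_one_le_exp _

lemma inv_le_log_sub_log_sub_one {x : ℝ} (hx : 1 < x) : x⁻¹ ≤ log x - log (x - 1) := by
  have h := one_sub_inv_le_log_of_pos (div_pos (by linarith : 0 < x) (by linarith : 0 < x - 1))
  rwa [log_div (by linarith) (by linarith), inv_div, one_sub_div (by linarith), sub_sub_cancel,
    one_div] at h

lemma log_add_one_sub_log_le_inv {x : ℝ} (hx : 0 < x) : log (x + 1) - log x ≤ x⁻¹ := by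
  have h := log_le_sub_one_of_pos (div_pos (by linarith : 0 < x + 1) hx)
  rwa [log_div (by linarith) hx.ne', add_div, div_self hx.ne', add_sub_cancel_left, one_div] at h

section HarmonicSums

variable {c : ℝ} (hc : 0 < c) {l n : ℕ} (hln : l ≤ n)
include hc hln

lemma sum_Ico_inv_add_le_log (hl : 1 ≤ l) :
    ∑ k ∈ Ico l n, ((k : ℝ) + c)⁻¹ ≤ log (n - 1 + c) - log (l - 1 + c) := by
  rw [← sum_Ico_sub (fun k : ℕ => log ((k : ℝ) - 1 + c)) hln]
  refine sum_le_sum fun k hk => ?_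
  have hk1 : (1 : ℝ) ≤ k := by exact_mod_cast hl.trans (mem_Ico.1 hk).1
  rw [Nat.cast_succ, add_sub_cancel_right, show (k : ℝ) - 1 + c = k + c - 1 by ring]
  exact inv_le_log_sub_log_sub_one (by linarith)

lemma log_sub_log_le_sum_Ico_inv_add :
    log (n + c) - log (l + c) ≤ ∑ k ∈ Ico l n, ((k : ℝ) + c)⁻¹ := by
  rw [← sum_Ico_sub (fun k : ℕ => log ((k : ℝ) + c)) hln]
  refine sum_le_sum fun k _ => ?_
  rw [Nat.cast_succ, add_right_comm]
  exact log_add_one_sub_log_le_inv (by positivity)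

lemma sum_Ico_inv_add_sq_le (hl : 1 ≤ l) : ∑ k ∈ Ico l n, ((k : ℝ) + c)⁻¹ ^ 2 ≤ c⁻¹ := by
  have hl1 : (1 : ℝ) ≤ l := by exact_mod_cast hl
  have hn1 : (1 : ℝ) ≤ n := by exact_mod_cast hl.trans hln
  calc ∑ k ∈ Ico l n, ((k : ℝ) + c)⁻¹ ^ 2
      ≤ ∑ k ∈ Ico l n, (-(((k + 1 : ℕ) : ℝ) - 1 + c)⁻¹ - -((k : ℝ) - 1 + c)⁻¹) := by
        refine sum_le_sum fun k hk => ?_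
        have hk1 : (1 : ℝ) ≤ k := by exact_mod_cast hl.trans (mem_Ico.1 hk).1
        rw [neg_sub_neg, Nat.cast_succ, add_sub_cancel_right, inv_sub_inv (by linarith) (by linarith),
          show (k : ℝ) + c - (k - 1 + c) = 1 by ring, one_div, sq, ← mul_inv]
        exact inv_anti₀ (by positivity) (by nlinarith)
    _ = (l - 1 + c)⁻¹ - (n - 1 + c)⁻¹ := by
        rw [sum_Ico_sub (fun k : ℕ => -((k : ℝ) - 1 + c)⁻¹) hln]
        ring
    _ ≤ c⁻¹ := by
        have : 0 ≤ (n - 1 + c)⁻¹ := by rw [inv_nonneg]; linarith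
        have : (l - 1 + c)⁻¹ ≤ c⁻¹ := inv_anti₀ hc (by linarith)
        linarith

lemma abs_sum_Ico_inv_add_sub_log_le (hl : 1 ≤ l) :
    |∑ k ∈ Ico l n, ((k : ℝ) + c)⁻¹ - log (n / l)| ≤ log (1 + c) + log (1 + c⁻¹) := by
  have hl1 : (1 : ℝ) ≤ l := by exact_mod_cast hl
  have hn1 : (1 : ℝ) ≤ n := by exact_mod_cast hl.trans hln
  have hupper := sum_Ico_inv_add_le_log hc hln hl
  have hlower := log_sub_log_le_sum_Ico_inv_add hc hln
  have hlog_n : log (n - 1 + c) ≤ log n + log (1 + c) := by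
    rw [← log_mul (by positivity) (by positivity)]
    exact log_le_log (by linarith) (by nlinarith)
  have hlog_l : log l ≤ log (l - 1 + c) + log (1 + c⁻¹) := by
    rw [← log_mul (by linarith) (by positivity)]
    refine log_le_log (by positivity) ?_
    rw [mul_add, mul_one, add_mul, mul_inv_cancel₀ hc.ne']
    have : 0 ≤ (l - 1) * c⁻¹ := by have := inv_pos.2 hc; nlinarith
    linarith
  have hlog_n' : log n ≤ log (n + c) := log_le_log (by positivity) (by linarith)
  have hlog_l' : log (l + c) ≤ log l + log (1 + c) := by
    rw [← log_mul (by positivity) (by positivity)]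
    exact log_le_log (by positivity) (by nlinarith)
  have hlog_inv : 0 ≤ log (1 + c⁻¹) := log_nonneg (by have := inv_pos.2 hc; linarith)
  rw [log_div (by positivity) (by positivity), abs_sub_le_iff]
  constructor <;> linarith

end HarmonicSums

def harmonicDefect (b w0 : ℝ) : ℝ := log (1 + w0 / b) + log (1 + b / w0)

lemma harmonicDefect_nonneg {b w0 : ℝ} (hb : 0 < b) (hw0 : 0 < w0) : 0 ≤ harmonicDefect b w0 :=
  add_nonneg (log_nonneg (by have := div_pos hw0 hb; linarith))
    (log_nonneg (by have := div_pos hb hw0; linarith))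

section OmegaSums

variable {b w0 : ℝ} (hb : 0 < b) (hw0 : 0 < w0) {l n : ℕ} (hl : 1 ≤ l) (hln : l ≤ n)
include hb

lemma inv_add_mul_eq (k : ℝ) : (w0 + k * b)⁻¹ = b⁻¹ * (k + w0 / b)⁻¹ := by
  rw [← mul_inv, mul_add, mul_div_cancel₀ _ hb.ne', add_comm, mul_comm]

include hw0 hl hln

lemma abs_sum_Ico_inv_add_mul_sub_le :
    |∑ k ∈ Ico l n, (w0 + k * b)⁻¹ - log (n / l) / b| ≤ harmonicDefect b w0 / b := by
  have h := abs_sum_Ico_inv_add_sub_log_le (div_pos hw0 hb) hln hl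
  rw [inv_div] at h
  unfold harmonicDefect
  simp only [inv_add_mul_eq hb, ← mul_sum]
  rw [div_eq_inv_mul (log _), div_eq_inv_mul (_ + _), ← mul_sub, abs_mul, abs_of_pos (inv_pos.2 hb)]
  exact mul_le_mul_of_nonneg_left h (inv_nonneg.2 hb.le)

lemma sum_Ico_inv_add_mul_sq_le : ∑ k ∈ Ico l n, (w0 + k * b)⁻¹ ^ 2 ≤ (b * w0)⁻¹ := by
  have h := sum_Ico_inv_add_sq_le (div_pos hw0 hb) hln hl
  simp only [inv_add_mul_eq hb, mul_pow, ← mul_sum]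
  calc b⁻¹ ^ 2 * ∑ k ∈ Ico l n, ((k : ℝ) + w0 / b)⁻¹ ^ 2 ≤ b⁻¹ ^ 2 * (w0 / b)⁻¹ := by gcongr
    _ = (b * w0)⁻¹ := by field_simp

end OmegaSums

section Expansion

variable {R S : Type*} [CommSemiring R] [Semiring S] [Algebra R S]

lemma mul_aeval_eq_sum_range {N P : S} {ν : ℕ} (hPN : Commute P N) (hN : N ^ (ν + 1) * P = 0)
    (p : R[X]) : P * aeval N p = ∑ j ∈ range (ν + 1), p.coeff j • (N ^ j * P) := by
  have hvanish : ∀ j ≥ ν + 1, p.coeff j • (N ^ j * P) = 0 := fun j hj => by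
    rw [← Nat.sub_add_cancel hj, pow_add, mul_assoc, hN, mul_zero, smul_zero]
  rw [aeval_eq_sum_range' (Nat.lt_succ_self _ |>.trans_le (le_max_left _ (ν + 1))), mul_sum,
    ← eventually_constant_sum hvanish (le_max_right _ _)]
  exact sum_congr rfl fun j _ => by rw [mul_smul_comm, (hPN.pow_right j).eq]

end Expansion

lemma pow_succ_add_mul_pow_le {x y : ℝ} (hx : 0 ≤ x) (hy : 0 ≤ y) (m : ℕ) :
    x ^ (m + 1) + y * x ^ m ≤ (x + y) ^ (m + 1) :=
  calc x ^ (m + 1) + y * x ^ m = x ^ m * (x + y) := by ring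
    _ ≤ (x + y) ^ m * (x + y) := by gcongr; linarith
    _ = (x + y) ^ (m + 1) := (pow_succ _ _).symm

lemma norm_coeff_prod_C_add_C_mul_X_le {𝕜 ι : Type*} [NormedField 𝕜] (s : Finset ι)
    (c d : ι → 𝕜) (γ : ι → ℝ) (κ : ℝ) (hc : ∀ i ∈ s, ‖c i‖ ≤ γ i)
    (hκ : ∀ i ∈ s, 1 ≤ κ * γ i) (j : ℕ) :
    ‖(∏ i ∈ s, (C (c i) + C (d i) * X)).coeff j‖ ≤
      (κ * ∑ i ∈ s, ‖d i‖) ^ j * ∏ i ∈ s, γ i := by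
  classical
  -- `c i` may vanish, so the `d i` term is absorbed through `1 ≤ κ * γ i`, not by dividing by `c i`.
  induction s using Finset.induction_on generalizing j with
  | empty => cases j <;> simp [coeff_one]
  | insert i s hi ih =>
    have hc' := fun k hk => hc k (mem_insert_of_mem hk)
    have hκ' := fun k hk => hκ k (mem_insert_of_mem hk)
    have hγi : 0 ≤ γ i := (norm_nonneg _).trans (hc i (s.mem_insert_self i))
    have hκ0 : 0 ≤ κ := by
      by_contra! h
      linarith [mul_nonpos_of_nonpos_of_nonneg h.le hγi, hκ i (s.mem_insert_self i)]
    have hΓ : 0 ≤ ∏ k ∈ s, γ k := (norm_nonneg _).trans (by simpa using ih hc' hκ' 0)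
    set D := ∑ k ∈ s, ‖d k‖
    set p := ∏ k ∈ s, (C (c k) + C (d k) * X)
    rw [prod_insert hi, sum_insert hi, prod_insert hi,
      add_mul, mul_assoc, coeff_add, coeff_C_mul, coeff_C_mul]
    cases j with
    | zero =>
      simp only [coeff_X_mul_zero, mul_zero, add_zero, pow_zero, one_mul, norm_mul]
      exact mul_le_mul (hc i (s.mem_insert_self i)) (by simpa using ih hc' hκ' 0)
        (norm_nonneg _) hγi
    | succ m =>
      rw [coeff_X_mul]
      calc ‖c i * p.coeff (m + 1) + d i * p.coeff m‖
          ≤ γ i * ((κ * D) ^ (m + 1) * ∏ k ∈ s, γ k) + ‖d i‖ * ((κ * D) ^ m * ∏ k ∈ s, γ k) := by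
            refine (norm_add_le _ _).trans ?_
            rw [norm_mul, norm_mul]
            gcongr
            · exact hc i (s.mem_insert_self i)
            · exact ih hc' hκ' _
            · exact ih hc' hκ' _
        _ ≤ γ i * ((κ * D) ^ (m + 1) + κ * ‖d i‖ * (κ * D) ^ m) * ∏ k ∈ s, γ k := by
            have := hκ i (s.mem_insert_self i)
            have : 0 ≤ ‖d i‖ * ((κ * D) ^ m * ∏ k ∈ s, γ k) := by positivity
            nlinarith
        _ ≤ γ i * (κ * D + κ * ‖d i‖) ^ (m + 1) * ∏ k ∈ s, γ k := by
            gcongr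
            exact pow_succ_add_mul_pow_le (by positivity) (by positivity) m
        _ = (κ * (‖d i‖ + D)) ^ (m + 1) * (γ i * ∏ k ∈ s, γ k) := by ring

namespace PolyaUrnPaper

variable {q : ℕ}

section SpectralProjection

variable {A P P' : Matrix (Fin q) (Fin q) ℂ} {μ : ℂ}

lemma ker_mulVecLin_mem_invtSubmodule_of_commute {M T : Matrix (Fin q) (Fin q) ℂ}
    (h : Commute M T) : LinearMap.ker T.mulVecLin ∈ Module.End.invtSubmodule M.mulVecLin := by
  intro x hx
  simp only [Submodule.mem_comap, LinearMap.mem_ker, Matrix.mulVecLin_apply] at hx ⊢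
  rw [mulVec_mulVec, ← h.eq, ← mulVec_mulVec, hx, mulVec_zero]

lemma genEig_mem_invtSubmodule (A : Matrix (Fin q) (Fin q) ℂ) (μ : ℂ) :
    genEig A μ ∈ Module.End.invtSubmodule A.mulVecLin :=
  ker_mulVecLin_mem_invtSubmodule_of_commute <|
    ((Commute.refl A).sub_right ((Commute.one_right A).smul_right μ)).pow_right q

lemma IsSpectralProjection.isIdempotentElem (hP : IsSpectralProjection A μ P) :
    IsIdempotentElem P.mulVecLin := by
  rw [IsIdempotentElem, Module.End.mul_eq_comp, ← Matrix.mulVecLin_mul, hP.1]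

lemma IsSpectralProjection.commute (hP : IsSpectralProjection A μ P) : Commute P A := by
  have hker : LinearMap.ker P.mulVecLin ∈ Module.End.invtSubmodule A.mulVecLin := by
    rw [hP.2.2]
    exact iSup₂_le fun ν hν => (genEig_mem_invtSubmodule A ν).trans
      (Submodule.comap_mono (le_iSup₂ (f := fun ν _ => genEig A ν) ν hν))
  have h := (LinearMap.IsIdempotentElem.commute_iff hP.isIdempotentElem).2
    ⟨hP.2.1 ▸ genEig_mem_invtSubmodule A μ, hker⟩
  refine Matrix.toLin'.injective ?_
  simpa only [Matrix.toLin'_apply', Matrix.mulVecLin_mul, ← Module.End.mul_eq_comp] using h.eq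

lemma IsSpectralProjection.unique (hP : IsSpectralProjection A μ P)
    (hP' : IsSpectralProjection A μ P') : P = P' :=
  Matrix.toLin'.injective <| LinearMap.IsIdempotentElem.ext hP.isIdempotentElem hP'.isIdempotentElem
    ⟨hP.2.1.trans hP'.2.1.symm, hP.2.2.trans hP'.2.2.symm⟩

lemma ker_pow_le_ker_pow_nuOf_succ (A : Matrix (Fin q) (Fin q) ℂ) (μ : ℂ) (m : ℕ) :
    LinearMap.ker ((A - μ • 1) ^ m).mulVecLin ≤
      LinearMap.ker ((A - μ • 1) ^ (nuOf A μ + 1)).mulVecLin := by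
  set T := (A - μ • 1).mulVecLin
  have hpow (k : ℕ) : ((A - μ • 1) ^ k).mulVecLin = T ^ k := by
    rw [← Matrix.toLin'_apply', Matrix.toLin'_pow, Matrix.toLin'_apply']
  have hstab : LinearMap.ker (T ^ (nuOf A μ + 1)) = LinearMap.ker (T ^ (nuOf A μ + 2)) := by
    have hne : {k : ℕ | LinearMap.ker ((A - μ • 1) ^ (k + 1)).mulVecLin =
        LinearMap.ker ((A - μ • 1) ^ (k + 2)).mulVecLin}.Nonempty := by
      obtain ⟨k, -, hk⟩ := Module.End.exists_ker_pow_eq_ker_pow_succ T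
      refine ⟨k, ?_⟩
      simp only [Set.mem_ofPred_eq, hpow]
      rw [← Module.End.ker_pow_constant hk 1, ← Module.End.ker_pow_constant hk 2]
    rw [← hpow, ← hpow]
    exact Nat.sInf_mem hne
  rw [hpow, hpow, Module.End.ker_pow_constant hstab m, pow_add, Module.End.mul_eq_comp]
  exact LinearMap.ker_le_ker_comp _ _

lemma IsSpectralProjection.pow_nuOf_succ_mul_eq_zero (hP : IsSpectralProjection A μ P) :
    (A - μ • 1) ^ (nuOf A μ + 1) * P = 0 := by
  refine Matrix.toLin'.injective ?_
  rw [Matrix.toLin'_mul, map_zero, ← LinearMap.range_le_ker_iff, Matrix.toLin'_apply',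
    Matrix.toLin'_apply', hP.2.1]
  exact ker_pow_le_ker_pow_nuOf_succ A μ q

end SpectralProjection

-- `I + ω_k⁻¹ A = (1 + ω_k⁻¹ μ) I + ω_k⁻¹ (A - μ I)`: see `FprodC_eq_aeval`.
def FprodPoly (w : ℕ → ℝ) (μ : ℂ) (l n : ℕ) : ℂ[X] :=
  ∏ k ∈ Ico l n, (C (1 + (w k : ℂ)⁻¹ * μ) + C ((w k : ℂ)⁻¹) * X)

lemma FprodC_eq_aeval (A : Matrix (Fin q) (Fin q) ℂ) (w : ℕ → ℝ) (μ : ℂ) (l n : ℕ) :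
    FprodC A w l n = aeval (A - μ • 1) (FprodPoly w μ l n) := by
  change _ = aeval (A - μ • 1) ((List.range' l (n - l)).map _).prod
  rw [map_list_prod, List.map_map, FprodC]
  congr 1
  refine List.map_congr_left fun k _ => ?_
  simp only [Function.comp_apply, map_add, map_mul, aeval_C, aeval_X,
    Algebra.algebraMap_eq_smul_one, smul_mul_assoc, one_mul]
  module

lemma opNorm_eq_norm (M : Matrix (Fin q) (Fin q) ℂ) : opNorm M = ‖M‖ := by
  rw [Matrix.l2_opNorm_def]
  rfl

section Coefficients

variable {b w0 : ℝ} (μ : ℂ)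

lemma norm_one_add_ofReal_mul_le {d : ℝ} (hd : 0 ≤ d) :
    ‖1 + (d : ℂ) * μ‖ ≤ exp (μ.re * d + ‖μ‖ ^ 2 / 2 * d ^ 2) := by
  refine (norm_one_add_le_exp _).trans_eq ?_
  rw [Complex.re_ofReal_mul, norm_mul, Complex.norm_real, Real.norm_of_nonneg hd]
  ring_nf

lemma one_le_exp_mul_exp {d : ℝ} (hd : 0 ≤ d) (hdw : d ≤ w0⁻¹) :
    1 ≤ exp (‖μ‖ / w0) * exp (μ.re * d + ‖μ‖ ^ 2 / 2 * d ^ 2) := by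
  rw [← exp_add]
  refine one_le_exp ?_
  have h1 : ‖μ‖ * d ≤ ‖μ‖ / w0 := by
    rw [div_eq_mul_inv]; exact mul_le_mul_of_nonneg_left hdw (norm_nonneg _)
  have h2 : -‖μ‖ * d ≤ μ.re * d :=
    mul_le_mul_of_nonneg_right (neg_le_of_abs_le (Complex.abs_re_le_norm μ)) hd
  have h3 : 0 ≤ ‖μ‖ ^ 2 / 2 * d ^ 2 := by positivity
  linarith

variable (hb : 0 < b) (hw0 : 0 < w0)
include hb hw0

lemma norm_coeff_FprodPoly_le_exp (l n j : ℕ) :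
    ‖(FprodPoly (fun k => w0 + k * b) μ l n).coeff j‖ ≤
      (exp (‖μ‖ / w0) * ∑ k ∈ Ico l n, (w0 + k * b)⁻¹) ^ j *
        exp (μ.re * ∑ k ∈ Ico l n, (w0 + k * b)⁻¹ +
          ‖μ‖ ^ 2 / 2 * ∑ k ∈ Ico l n, (w0 + k * b)⁻¹ ^ 2) := by
  have hw (k : ℕ) : 0 < w0 + k * b := by positivity
  have hwinv (k : ℕ) : (w0 + k * b)⁻¹ ≤ w0⁻¹ :=
    inv_anti₀ hw0 (le_add_of_nonneg_right (by positivity))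
  simp only [FprodPoly]
  refine (norm_coeff_prod_C_add_C_mul_X_le (𝕜 := ℂ) _ _ _
    (fun k : ℕ => exp (μ.re * (w0 + k * b)⁻¹ + ‖μ‖ ^ 2 / 2 * (w0 + k * b)⁻¹ ^ 2))
    (exp (‖μ‖ / w0)) (fun k _ => ?_) (fun k _ => ?_) j).trans_eq ?_
  · simpa using norm_one_add_ofReal_mul_le μ (inv_nonneg.2 (hw k).le)
  · exact one_le_exp_mul_exp μ (inv_nonneg.2 (hw k).le) (hwinv k)
  · simp only [← exp_sum, sum_add_distrib, ← mul_sum]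
    congr 3
    refine sum_congr rfl fun k _ => ?_
    rw [← Complex.ofReal_inv, Complex.norm_real, Real.norm_of_nonneg (inv_nonneg.2 (hw k).le)]

lemma norm_coeff_FprodPoly_le {l n : ℕ} (hl : 1 ≤ l) (hln : l ≤ n) (j : ℕ) :
    ‖(FprodPoly (fun k => w0 + k * b) μ l n).coeff j‖ ≤
      exp (|μ.re| * harmonicDefect b w0 / b + ‖μ‖ ^ 2 / (2 * b * w0)) * (n / l : ℝ) ^ (μ.re / b) *
        (exp (‖μ‖ / w0) * (1 + harmonicDefect b w0) / b * (1 + log (n / l))) ^ j := by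
  set D := ∑ k ∈ Ico l n, (w0 + k * b)⁻¹
  set L := log (n / l : ℝ)
  set U := harmonicDefect b w0
  have hD := abs_sum_Ico_inv_add_mul_sub_le hb hw0 hl hln
  have hS := sum_Ico_inv_add_mul_sq_le hb hw0 hl hln
  have hl0 : (0 : ℝ) < l := by exact_mod_cast hl
  have ht : (1 : ℝ) ≤ n / l := (one_le_div hl0).2 (by exact_mod_cast hln)
  have hL : 0 ≤ L := log_nonneg ht
  have hU : 0 ≤ U := harmonicDefect_nonneg hb hw0
  have hD0 : 0 ≤ D := sum_nonneg fun k _ => by positivity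
  have hre : μ.re * D ≤ |μ.re| * U / b + log (n / l) * (μ.re / b) := by
    have := (le_abs_self _).trans ((abs_mul μ.re (D - L / b)).trans_le
      (mul_le_mul_of_nonneg_left hD (abs_nonneg _)))
    linarith [show μ.re * (D - L / b) = μ.re * D - L * (μ.re / b) by ring,
      show |μ.re| * (U / b) = |μ.re| * U / b by ring]
  have hsq : ‖μ‖ ^ 2 / 2 * ∑ k ∈ Ico l n, (w0 + k * b)⁻¹ ^ 2 ≤ ‖μ‖ ^ 2 / (2 * b * w0) := by
    calc ‖μ‖ ^ 2 / 2 * ∑ k ∈ Ico l n, (w0 + k * b)⁻¹ ^ 2 ≤ ‖μ‖ ^ 2 / 2 * (b * w0)⁻¹ := by gcongr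
      _ = ‖μ‖ ^ 2 / (2 * b * w0) := by field_simp
  have hκD : exp (‖μ‖ / w0) * D ≤ exp (‖μ‖ / w0) * (1 + U) / b * (1 + L) := by
    have hDle : D ≤ L / b + U / b := by linarith [(abs_le.1 hD).2]
    rw [mul_div_assoc, mul_assoc]
    gcongr
    calc D ≤ L / b + U / b := hDle
      _ ≤ (1 + U) / b * (1 + L) := by
        rw [← add_div, div_mul_eq_mul_div]
        gcongr
        nlinarith
  calc _ ≤ (exp (‖μ‖ / w0) * (1 + U) / b * (1 + L)) ^ j *
        (exp (|μ.re| * U / b + ‖μ‖ ^ 2 / (2 * b * w0)) * (n / l : ℝ) ^ (μ.re / b)) := by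
        refine (norm_coeff_FprodPoly_le_exp μ hb hw0 l n j).trans
          (mul_le_mul (pow_le_pow_left₀ (by positivity) hκD j) ?_ (exp_pos _).le (by positivity))
        rw [rpow_def_of_pos (by positivity), ← exp_add, exp_le_exp]
        linarith
    _ = _ := mul_comm _ _

end Coefficients

def spectralFprodConst (A P : Matrix (Fin q) (Fin q) ℂ) (μ : ℂ) (ν : ℕ) (b w0 : ℝ) : ℝ :=
  exp (|μ.re| * harmonicDefect b w0 / b + ‖μ‖ ^ 2 / (2 * b * w0)) *
    ∑ j ∈ range (ν + 1),
      (exp (‖μ‖ / w0) * (1 + harmonicDefect b w0) / b) ^ j * opNorm ((A - μ • 1) ^ j * P)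

section SpectralFprodConst

variable {A P : Matrix (Fin q) (Fin q) ℂ} {μ : ℂ} {ν : ℕ} {b w0 : ℝ} (hb : 0 < b) (hw0 : 0 < w0)
include hb hw0

lemma spectralFprodConst_nonneg : 0 ≤ spectralFprodConst A P μ ν b w0 := by
  have := harmonicDefect_nonneg hb hw0
  unfold spectralFprodConst
  simp only [opNorm_eq_norm]
  positivity

lemma opNorm_mul_FprodC_le (hPA : Commute P A) (hN : (A - μ • 1) ^ (ν + 1) * P = 0)
    {l n : ℕ} (hl : 1 ≤ l) (hln : l ≤ n) :
    opNorm (P * FprodC A (fun k => w0 + k * b) l n) ≤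
      spectralFprodConst A P μ ν b w0 * (n / l : ℝ) ^ (μ.re / b) * (1 + log (n / l)) ^ ν := by
  have hPN : Commute P (A - μ • 1) := hPA.sub_right ((Commute.one_right P).smul_right μ)
  have hL : 1 ≤ 1 + log (n / l : ℝ) :=
    le_add_of_nonneg_right (log_nonneg ((one_le_div (by positivity)).2 (by exact_mod_cast hln)))
  rw [FprodC_eq_aeval A _ μ, mul_aeval_eq_sum_range hPN hN, spectralFprodConst, mul_sum, sum_mul,
    sum_mul]
  set E := exp (|μ.re| * harmonicDefect b w0 / b + ‖μ‖ ^ 2 / (2 * b * w0))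
  set K := exp (‖μ‖ / w0) * (1 + harmonicDefect b w0) / b
  have hK : 0 ≤ K := by have := harmonicDefect_nonneg hb hw0; positivity
  simp only [opNorm_eq_norm]
  refine (norm_sum_le _ _).trans (sum_le_sum fun j hj => ?_)
  rw [norm_smul]
  calc _ ≤ E * (n / l : ℝ) ^ (μ.re / b) * (K * (1 + log (n / l))) ^ j * ‖(A - μ • 1) ^ j * P‖ := by
        gcongr
        exact norm_coeff_FprodPoly_le μ hb hw0 hl hln j
    _ = E * (K ^ j * ‖(A - μ • 1) ^ j * P‖) * (n / l : ℝ) ^ (μ.re / b) * (1 + log (n / l)) ^ j := by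
        rw [mul_pow]
        ring
    _ ≤ _ := by
        gcongr
        exact Nat.lt_succ_iff.1 (mem_range.1 hj)

end SpectralFprodConst

end PolyaUrnPaper

theorem opNorm_spectral_projection_Fprod_general
    {q : ℕ} (A : Matrix (Fin q) (Fin q) ℝ) (b : ℝ) (hb : 0 < b)
    (w0 : ℝ) (hw0 : 0 < w0) :
    ∃ C : ℝ, 0 < C ∧
      ∀ lam ∈ spectrum ℂ (A.map Complex.ofReal),
      ∀ Pm : Matrix (Fin q) (Fin q) ℂ,
        IsSpectralProjection (A.map Complex.ofReal) lam Pm →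
      ∀ l n : ℕ, 1 ≤ l → l ≤ n →
        opNorm (Pm * FprodC (A.map Complex.ofReal) (fun k => w0 + k * b) l n) ≤
          C * ((n : ℝ) / l) ^ (lam.re / b) *
            (1 + Real.log ((n : ℝ) / l)) ^ nuOf (A.map Complex.ofReal) lam := by
  set A' := A.map Complex.ofReal
  set K : ℂ → ℝ := fun lam =>
    spectralFprodConst A' (Classical.epsilon (IsSpectralProjection A' lam)) lam (nuOf A' lam) b w0
  have hfin := Matrix.finite_spectrum A'
  have hK : ∀ lam, 0 ≤ K lam := fun lam => spectralFprodConst_nonneg hb hw0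
  refine ⟨1 + ∑ lam ∈ hfin.toFinset, K lam,
    add_pos_of_pos_of_nonneg one_pos (sum_nonneg fun lam _ => hK lam), ?_⟩
  intro lam hlam Pm hPm l n hl hln
  have hCle :
      spectralFprodConst A' Pm lam (nuOf A' lam) b w0 ≤ 1 + ∑ lam ∈ hfin.toFinset, K lam := by
    rw [hPm.unique (Classical.epsilon_spec ⟨Pm, hPm⟩)]
    exact (single_le_sum (fun μ _ => hK μ) (hfin.mem_toFinset.2 hlam)).trans
      (le_add_of_nonneg_left zero_le_one)
  refine (opNorm_mul_FprodC_le hb hw0 hPm.commute hPm.pow_nuOf_succ_mul_eq_zero hl hln).trans ?_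
  have hlog : 0 ≤ log (n / l : ℝ) :=
    log_nonneg ((one_le_div (by positivity)).2 (by exact_mod_cast hln))
  gcongr

/-- **Lemma 6.1 (Janson).** Let `A` be a real `q×q` matrix with a real eigenvalue `b > 0`
dominating the real parts of all eigenvalues, and let `ω_k = ω₀ + k b` with `ω₀ > 0` and
`F_{ℓ,n} = ∏_{ℓ ≤ k < n} (I + ω_k⁻¹ A)`.  Then there is a constant `C` such that for every
eigenvalue `λ` of `A` and all `1 ≤ ℓ ≤ n`,
`‖P_λ F_{ℓ,n}‖ ≤ C (n/ℓ)^{Re λ/b} (1 + log (n/ℓ))^{ν_λ}`. -/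
theorem opNorm_spectral_projection_Fprod
    {q : ℕ} (A : Matrix (Fin q) (Fin q) ℝ) (b : ℝ) (hb : 0 < b)
    (hspec : LambdaOneIs (A.map Complex.ofReal) b)
    (w0 : ℝ) (hw0 : 0 < w0) :
    ∃ C : ℝ, 0 < C ∧
      ∀ lam ∈ spectrum ℂ (A.map Complex.ofReal),
      ∀ Pm : Matrix (Fin q) (Fin q) ℂ,
        IsSpectralProjection (A.map Complex.ofReal) lam Pm →
      ∀ l n : ℕ, 1 ≤ l → l ≤ n →
        opNorm (Pm * FprodC (A.map Complex.ofReal) (fun k => w0 + k * b) l n) ≤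
          C * ((n : ℝ) / l) ^ (lam.re / b) *
            (1 + Real.log ((n : ℝ) / l)) ^ nuOf (A.map Complex.ofReal) lam :=
  opNorm_spectral_projection_Fprod_general A b hb w0 hw0
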